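/- Let q ≥ 3 be an integer, let Π be a finite projective plane of order q, set δ = 1/√((q+1)·ln(q+1)), and let μ be an integer with 2 ≤ μ ≤ ((1−δ)·q − δ + 1)/2 + 1. Then Π contains a (1, μ)-saturating set of size at most 2·(2μ−1)·√((q+1)·ln(q+1)) + 2. -/

import Mathlib

open scoped Classical in
/-- The number of secants of a point set `S` through a point `Q`, counted with multiplicity:
the multiplicity of a line `ℓ` is `C(#(ℓ ∩ S), 2)`. -/
noncomputable def secantCount (L : Type*) {P : Type*} [Membership P L] [Fintype L]
    (S : Set P) (Q : P) : ℕ :=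
  ∑ ℓ : L, if Q ∈ ℓ then ({p ∈ S | p ∈ ℓ}.ncard).choose 2 else 0

/-- A point set `S` in a projective plane (with line type `L`) is *(1,μ)-saturating* if for
every point `Q` not in `S` the number of secants of `S` through `Q`, counted with
multiplicity, is at least `μ`. -/
def IsMuSaturating (L : Type*) {P : Type*} [Membership P L] [Fintype L]
    (S : Set P) (μ : ℕ) : Prop :=
  ∀ Q : P, Q ∉ S → μ ≤ secantCount L S Q

/-!
Take two lines `ℓ₁, ℓ₂` meeting in `E`, and `k`-subsets `S₁ ⊆ ℓ₁ \ {E}`, `S₂ ⊆ ℓ₂ \ {E}`; put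
`S = {E} ∪ S₁ ∪ S₂`. A point of `ℓ₁ ∪ ℓ₂` outside `S` lies on a line containing `k + 1 > μ`
points of `S`. A point `Q` off both lines lies on a 2-secant `xy` for every `x ∈ S₁` that is the
projection from `Q` of some `y ∈ S₂`, so it suffices that `S₁` meets each projected copy of `S₂`
in at least `μ` points. Fixing `S₂`, a union bound over the `q²` points `Q` produces such an `S₁`
as soon as `(q + 1)²` times the number of `k`-subsets meeting a fixed `k`-subset in fewer than
`μ` points is below `C(q, k)`; elementary hypergeometric tail estimates give this for
`k ≈ (2μ - 1)√((q + 1) ln (q + 1))`, and when that exceeds `q` the punctured lines themselves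
(`k = q`) work.
-/

open Finset Real

namespace Nat

theorem add_pow_mul_choose_le (a c m : ℕ) :
    (a + c) ^ m * a.choose m ≤ a ^ m * (a + c).choose m := by
  refine Nat.le_of_mul_le_mul_left ?_ m.factorial_pos
  have key : (a + c) ^ m * a.descFactorial m ≤ a ^ m * (a + c).descFactorial m := by
    simp only [descFactorial_eq_prod_range, pow_eq_prod_const, ← prod_mul_distrib]
    refine prod_le_prod' fun i _ => ?_
    rcases le_total i a with hi | hi
    · obtain ⟨d, rfl⟩ := Nat.exists_eq_add_of_le hi
      rw [show i + d + c - i = d + c by omega, show i + d - i = d by omega]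
      nlinarith
    · simp [Nat.sub_eq_zero_of_le hi]
  simpa only [descFactorial_eq_factorial_mul_choose, mul_left_comm (m.factorial)] using key

theorem sub_add_one_pow_mul_choose_sub_le {n k : ℕ} (hkn : k ≤ n) :
    ∀ j ≤ k, (n - k + 1) ^ j * n.choose (k - j) ≤ k ^ j * n.choose k
  | 0, _ => by simp
  | j + 1, hj => by
    have ih := sub_add_one_pow_mul_choose_sub_le hkn j (by omega)
    have step : n.choose (k - (j + 1)) * (n - k + j + 1) = n.choose (k - j) * (k - j) := by
      have := choose_succ_right_eq n (k - (j + 1))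
      rw [show k - (j + 1) + 1 = k - j by omega, show n - (k - (j + 1)) = n - k + j + 1 by omega]
        at this
      exact this.symm
    refine Nat.le_of_mul_le_mul_right ?_ (show 0 < n - k + j + 1 by omega)
    calc (n - k + 1) ^ (j + 1) * n.choose (k - (j + 1)) * (n - k + j + 1)
        = (n - k + 1) * (k - j) * ((n - k + 1) ^ j * n.choose (k - j)) := by
          rw [mul_assoc, step]; ring
      _ ≤ k * (n - k + j + 1) * (k ^ j * n.choose k) := by
        refine Nat.mul_le_mul ?_ ih
        nlinarith [Nat.sub_le k j, Nat.zero_le (n - k)]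
      _ = k ^ (j + 1) * n.choose k * (n - k + j + 1) := by ring

end Nat

/-- The number of `k`-subsets of an `n`-set meeting a fixed `k`-subset in fewer than `μ` points. -/
def lowMeetCount (n k μ : ℕ) : ℕ := ∑ j ∈ range μ, k.choose j * (n - k).choose (k - j)

theorem lowMeetCount_self {n μ : ℕ} (hμ : μ ≤ n) : lowMeetCount n n μ = 0 :=
  sum_eq_zero fun j hj => by
    rw [mem_range] at hj
    rw [Nat.sub_self, Nat.choose_eq_zero_of_lt (by omega : 0 < n - j), mul_zero]

section Counting

variable {α : Type*} [DecidableEq α]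

theorem card_filter_powersetCard_card_inter_lt_le {A M : Finset α} (hMA : M ⊆ A) {k : ℕ}
    (hM : #M = k) (μ : ℕ) :
    #{S ∈ A.powersetCard k | #(S ∩ M) < μ} ≤ lowMeetCount #A k μ := by
  have hsigma : lowMeetCount #A k μ =
      #((range μ).sigma fun j => M.powersetCard j ×ˢ (A \ M).powersetCard (k - j)) := by
    simp only [lowMeetCount, card_sigma, card_product, card_powersetCard, hM,
      card_sdiff_of_subset hMA]
  rw [hsigma]
  refine card_le_card_of_injOn (fun S => ⟨#(S ∩ M), S ∩ M, S \ M⟩) (fun S hS => ?_) ?_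
  · simp only [coe_filter, mem_powersetCard, Set.mem_ofPred_eq] at hS
    have := card_inter_add_card_sdiff S M
    simp only [coe_sigma, Set.mem_sigma_iff, coe_range, Set.mem_Iio, coe_product, Set.mem_prod,
      mem_coe, mem_powersetCard]
    exact ⟨hS.2, ⟨inter_subset_right, trivial⟩, sdiff_subset_sdiff hS.1.1 subset_rfl, by omega⟩
  · intro S _ S' _ h
    obtain ⟨-, h⟩ := Sigma.mk.inj_iff.mp h
    obtain ⟨hinter, hsdiff⟩ : S ∩ M = S' ∩ M ∧ S \ M = S' \ M := Prod.ext_iff.mp (eq_of_heq h)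
    rw [← sdiff_union_inter S M, ← sdiff_union_inter S' M, hinter, hsdiff]

theorem exists_mem_powersetCard_forall_le_card_inter {ι : Type*} (A : Finset α) (X : Finset ι)
    (M : ι → Finset α) {k μ : ℕ} (hM : ∀ i ∈ X, M i ⊆ A ∧ #(M i) = k)
    (hX : #X * lowMeetCount #A k μ < (#A).choose k) :
    ∃ S ∈ A.powersetCard k, ∀ i ∈ X, μ ≤ #(S ∩ M i) := by
  set bad := X.biUnion fun i => {S ∈ A.powersetCard k | #(S ∩ M i) < μ}
  have hbad : #bad < #(A.powersetCard k) := by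
    rw [card_powersetCard]
    refine (card_biUnion_le.trans ?_).trans_lt hX
    rw [← smul_eq_mul, ← sum_const]
    exact sum_le_sum fun i hi =>
      card_filter_powersetCard_card_inter_lt_le (hM i hi).1 (hM i hi).2 μ
  obtain ⟨S, hS, hSbad⟩ := exists_mem_notMem_of_card_lt_card hbad
  refine ⟨S, hS, fun i hi => not_lt.mp fun h => hSbad ?_⟩
  exact mem_biUnion.mpr ⟨i, hi, mem_filter.mpr ⟨hS, h⟩⟩

end Counting

theorem choose_mul_choose_sub_le {q k j : ℕ} (hq : 0 < q) (hkq : k ≤ q) (hjk : j ≤ k) :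
    (k.choose j * (q - k).choose (k - j) : ℝ) ≤
      (k ^ 2 / (q - k + 1)) ^ j * (1 - k / q) ^ (k - j) * q.choose k := by
  have hq' : (0 : ℝ) < q := Nat.cast_pos.mpr hq
  have hkq' : (k : ℝ) ≤ q := Nat.cast_le.mpr hkq
  have hb : 0 ≤ 1 - (k : ℝ) / q := by rw [sub_nonneg, div_le_one hq']; exact hkq'
  have hsub : ((q - k).choose (k - j) : ℝ) ≤ (1 - k / q) ^ (k - j) * q.choose (k - j) := by
    have h := Nat.cast_le (α := ℝ) |>.mpr (Nat.add_pow_mul_choose_le (q - k) k (k - j))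
    push_cast [Nat.sub_add_cancel hkq, Nat.cast_sub hkq] at h
    rw [one_sub_div hq'.ne', div_pow, div_mul_eq_mul_div, le_div_iff₀ (by positivity)]
    linarith
  have hshift : (q.choose (k - j) : ℝ) ≤ (k / (q - k + 1)) ^ j * q.choose k := by
    have h := Nat.cast_le (α := ℝ) |>.mpr (Nat.sub_add_one_pow_mul_choose_sub_le hkq j hjk)
    push_cast [Nat.cast_sub hkq] at h
    rw [div_pow, div_mul_eq_mul_div, le_div_iff₀ (pow_pos (by linarith) _)]
    linarith
  have hchoose : (k.choose j : ℝ) ≤ k ^ j := by exact_mod_cast Nat.choose_le_pow k j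
  calc (k.choose j * (q - k).choose (k - j) : ℝ)
      ≤ k ^ j * ((1 - k / q) ^ (k - j) * ((k / (q - k + 1)) ^ j * q.choose k)) := by
        gcongr
        exact hsub.trans (by gcongr)
    _ = (k ^ 2 / (q - k + 1)) ^ j * (1 - k / q) ^ (k - j) * q.choose k := by
        rw [div_pow, div_pow, ← pow_mul, mul_comm 2 j, pow_mul']; ring

theorem lowMeetCount_le {q k μ : ℕ} (hq : 0 < q) (hμk : μ ≤ k) (hkq : k ≤ q) :
    (lowMeetCount q k μ : ℝ) ≤
      μ * ((q + 1) ^ 2) ^ (μ - 1) * exp (-(k / q * (k - μ + 1))) * q.choose k := by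
  have hq' : (0 : ℝ) < q := Nat.cast_pos.mpr hq
  have hkq' : (k : ℝ) ≤ q := Nat.cast_le.mpr hkq
  have hr : (k : ℝ) ^ 2 / (q - k + 1) ≤ (q + 1) ^ 2 :=
    (div_le_self (by positivity) (by linarith)).trans (by gcongr; linarith)
  have hb : 0 ≤ 1 - (k : ℝ) / q := by rw [sub_nonneg, div_le_one hq']; exact hkq'
  have hbexp : 1 - (k : ℝ) / q ≤ exp (-(k / q)) := by
    linarith [add_one_le_exp (-(k / q : ℝ))]
  have hterm : ∀ j ∈ range μ, (k.choose j * (q - k).choose (k - j) : ℝ) ≤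
      ((q + 1) ^ 2) ^ (μ - 1) * exp (-(k / q * (k - μ + 1))) * q.choose k := by
    intro j hj
    have hjμ : j + 1 ≤ μ := mem_range.mp hj
    refine (choose_mul_choose_sub_le hq hkq (by omega)).trans ?_
    gcongr ?_ * _
    calc (k ^ 2 / (q - k + 1) : ℝ) ^ j * (1 - k / q) ^ (k - j)
        ≤ ((q + 1) ^ 2) ^ j * exp (-(k / q)) ^ (k - j) := by gcongr
      _ ≤ ((q + 1) ^ 2) ^ (μ - 1) * exp (-(k / q * (k - μ + 1))) := by
          rw [← exp_nat_mul, Nat.cast_sub (by omega)]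
          gcongr
          · nlinarith
          · omega
          · have : (j : ℝ) + 1 ≤ μ := by exact_mod_cast hjμ
            have : 0 ≤ (k : ℝ) / q := by positivity
            nlinarith
  calc (lowMeetCount q k μ : ℝ)
        = ∑ j ∈ range μ, (k.choose j * (q - k).choose (k - j) : ℝ) := by
          push_cast [lowMeetCount]; rfl
    _ ≤ ∑ j ∈ range μ, ((q + 1) ^ 2) ^ (μ - 1) * exp (-(k / q * (k - μ + 1))) * q.choose k :=
        sum_le_sum hterm
    _ = _ := by rw [sum_const, card_range, nsmul_eq_mul]; ring

theorem one_le_log_add_one {x : ℝ} (hx : 2 ≤ x) : 1 ≤ log (x + 1) := by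
  rw [le_log_iff_exp_le (by linarith)]
  linarith [exp_one_lt_d9]

theorem two_le_sqrt_mul_log_add_one {x : ℝ} (hx : 3 ≤ x) : 2 ≤ √((x + 1) * log (x + 1)) := by
  rw [show (2 : ℝ) = √(2 ^ 2) by simp]
  gcongr
  nlinarith [one_le_log_add_one (by linarith : 2 ≤ x)]

theorem mul_log_lt_of_sqrt_mul_log_lt {q k μ : ℕ} (hq : 3 ≤ q) (hμ : 2 ≤ μ)
    (hk : (2 * μ - 1) * √((q + 1) * log (q + 1)) - 1 / 2 < k) :
    (2 * μ + 1) * log (q + 1) < k / q * (k - μ + 1) := by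
  set s := √((q + 1) * log (q + 1))
  set m : ℝ := 2 * μ - 1
  have hq' : (3 : ℝ) ≤ q := by exact_mod_cast hq
  have hm : 3 ≤ m := by
    have : (2 : ℝ) ≤ μ := by exact_mod_cast hμ
    linarith
  have hs : 2 ≤ s := two_le_sqrt_mul_log_add_one hq'
  have hL := one_le_log_add_one (by linarith : (2 : ℝ) ≤ q)
  have hs2 : s ^ 2 = (q + 1) * log (q + 1) := sq_sqrt (by positivity)
  have hk₁ : m * (s - 1 / 2) < k := by nlinarith
  have hk₂ : m * (s - 1 / 2) < k - μ + 1 := by linarith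
  -- `(m + 2) / m² ≤ 5/9 ≤ 9/16 ≤ (s - 1/2)² / s²` for `m ≥ 3`, `s ≥ 2`
  have hms : (m + 2) * s ^ 2 ≤ (m * (s - 1 / 2)) ^ 2 := by
    nlinarith [mul_nonneg (sub_nonneg.mpr hm) (sub_nonneg.mpr hs)]
  rw [div_mul_eq_mul_div, lt_div_iff₀ (by linarith)]
  have : 0 < m * (s - 1 / 2) := by nlinarith
  nlinarith [mul_lt_mul'' hk₁ hk₂ this.le this.le]

theorem sq_mul_lowMeetCount_lt_choose {q k μ : ℕ} (hq : 3 ≤ q) (hμ : 2 ≤ μ) (hkq : k ≤ q)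
    (hk : (2 * μ - 1) * √((q + 1) * log (q + 1)) - 1 / 2 < k) :
    (q + 1) ^ 2 * lowMeetCount q k μ < q.choose k := by
  have hq' : (3 : ℝ) ≤ q := by exact_mod_cast hq
  have hμk : μ < k := by
    have : (2 : ℝ) ≤ μ := by exact_mod_cast hμ
    have := two_le_sqrt_mul_log_add_one hq'
    exact_mod_cast (show (μ : ℝ) < k by nlinarith)
  have hμq : (μ : ℝ) ≤ q + 1 := by
    have : μ ≤ q := by omega
    exact_mod_cast this.trans q.le_succ
  have hC : (0 : ℝ) < q.choose k := by exact_mod_cast Nat.choose_pos hkq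
  have hexp : ((q : ℝ) + 1) ^ (2 * μ + 1) * exp (-(k / q * (k - μ + 1))) < 1 := by
    rw [← exp_log (by positivity : (0 : ℝ) < q + 1), ← exp_nat_mul, ← exp_add, exp_lt_one_iff]
    have := mul_log_lt_of_sqrt_mul_log_lt hq hμ hk
    push_cast
    linarith
  have hpow : ((q : ℝ) + 1) ^ 2 * μ * ((q + 1) ^ 2) ^ (μ - 1) ≤ (q + 1) ^ (2 * μ + 1) := by
    calc ((q : ℝ) + 1) ^ 2 * μ * ((q + 1) ^ 2) ^ (μ - 1)
        ≤ (q + 1) ^ 2 * (q + 1) * ((q + 1) ^ 2) ^ (μ - 1) := by gcongr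
      _ = ((q : ℝ) + 1) ^ (2 * μ + 1) := by
          rw [← pow_succ, ← pow_mul, ← pow_add]; congr 1; omega
  suffices ((q : ℝ) + 1) ^ 2 * lowMeetCount q k μ < q.choose k by exact_mod_cast this
  calc ((q : ℝ) + 1) ^ 2 * lowMeetCount q k μ
      ≤ (q + 1) ^ 2 *
          (μ * ((q + 1) ^ 2) ^ (μ - 1) * exp (-(k / q * (k - μ + 1))) * q.choose k) := by
        gcongr
        exact lowMeetCount_le (by omega) hμk.le hkq
    _ ≤ (q + 1) ^ (2 * μ + 1) * exp (-(k / q * (k - μ + 1))) * q.choose k := by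
        rw [← mul_assoc, ← mul_assoc, ← mul_assoc]
        gcongr
    _ < q.choose k := by nlinarith

section Secants

variable {P L : Type*} [Membership P L] [Fintype L]

theorem choose_two_le_secantCount (S : Set P) {Q : P} {ℓ : L} (hQ : Q ∈ ℓ) :
    ({p ∈ S | p ∈ ℓ}.ncard).choose 2 ≤ secantCount L S Q := by
  classical
  calc _ = if Q ∈ ℓ then ({p ∈ S | p ∈ ℓ}.ncard).choose 2 else 0 := (if_pos hQ).symm
    _ ≤ _ := single_le_sum
        (f := fun ℓ' => if Q ∈ ℓ' then ({p ∈ S | p ∈ ℓ'}.ncard).choose 2 else 0)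
        (fun _ _ => Nat.zero_le _) (mem_univ ℓ)

theorem card_le_secantCount (S : Set P) (Q : P) (T : Finset L)
    (hT : ∀ ℓ ∈ T, Q ∈ ℓ ∧ 1 < {p ∈ S | p ∈ ℓ}.ncard) : #T ≤ secantCount L S Q := by
  rw [card_eq_sum_ones, secantCount]
  refine (sum_le_sum fun ℓ hℓ => ?_).trans (sum_le_sum_of_subset (subset_univ T))
  rw [if_pos (hT ℓ hℓ).1]
  exact Nat.choose_pos (hT ℓ hℓ).2

variable [Finite P]

theorem secantCount_mono {S S' : Set P} (h : S ⊆ S') (Q : P) :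
    secantCount L S Q ≤ secantCount L S' Q :=
  sum_le_sum fun ℓ _ => by
    split_ifs
    · exact Nat.choose_le_choose 2 (Set.ncard_le_ncard fun p hp => ⟨h hp.1, hp.2⟩)
    · exact le_rfl

theorem le_secantCount_of_lt_card {S : Set P} {Q : P} {ℓ : L} (hQ : Q ∈ ℓ) {T : Finset P}
    (hT : ∀ x ∈ T, x ∈ S ∧ x ∈ ℓ) {μ : ℕ} (hμ : μ < #T) : μ ≤ secantCount L S Q := by
  have hcard : μ + 1 ≤ {p ∈ S | p ∈ ℓ}.ncard := by
    rw [← Set.ncard_coe_finset] at hμ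
    exact hμ.trans_le (Set.ncard_le_ncard fun x hx => hT x hx)
  calc μ ≤ (μ + 1).choose 2 := by
        rw [Nat.choose_succ_succ', Nat.choose_one_right]; exact Nat.le_add_right μ _
    _ ≤ _ := Nat.choose_le_choose 2 hcard
    _ ≤ _ := choose_two_le_secantCount S hQ

end Secants

namespace Configuration.ProjectivePlane

open HasPoints HasLines Nondegenerate

variable {P L : Type*} [Membership P L] [ProjectivePlane P L]

open scoped Classical in
/-- Central projection from `Q` onto `ℓ`: the point where the line `Qy` meets `ℓ`
(junk value `Q` when `Q = y` or `Q ∈ ℓ`). -/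
noncomputable def project (ℓ : L) (Q y : P) : P :=
  if h : Q ≠ y then if h' : mkLine h = ℓ then Q else mkPoint h' else Q

variable {ℓ ℓ' m : L} {Q x y : P}

theorem eq_of_mem_of_mem (hxy : x ≠ y) (hxℓ : x ∈ ℓ) (hyℓ : y ∈ ℓ) (hxm : x ∈ m) (hym : y ∈ m) :
    ℓ = m :=
  (eq_or_eq hxℓ hyℓ hxm hym).resolve_left hxy

theorem project_mem (hQ : Q ∉ ℓ) (hQy : Q ≠ y) : project ℓ Q y ∈ ℓ ∧
    ∀ m : L, Q ∈ m → y ∈ m → project ℓ Q y ∈ m := by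
  have hax := mkLine_ax (L := L) hQy
  have hline : mkLine hQy ≠ ℓ := fun h => hQ (h ▸ hax.1)
  rw [project, dif_pos hQy, dif_neg hline]
  refine ⟨(mkPoint_ax hline).2, fun m hQm hym => ?_⟩
  exact eq_of_mem_of_mem hQy hax.1 hax.2 hQm hym ▸ (mkPoint_ax hline).1

theorem project_of_mem (hQ : Q ∉ ℓ) (hy : y ∈ ℓ) : project ℓ Q y = y := by
  have hQy : Q ≠ y := fun h => hQ (h ▸ hy)
  obtain ⟨hℓ, hm⟩ := project_mem hQ hQy
  have hax := mkLine_ax (L := L) hQy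
  exact (eq_or_eq hℓ hy (hm _ hax.1 hax.2) hax.2).resolve_right fun h => hQ (h ▸ hax.1)

theorem project_injOn (hQ : Q ∉ ℓ) (hQ' : Q ∉ ℓ') : Set.InjOn (project ℓ Q) {y | y ∈ ℓ'} := by
  intro y (hy : y ∈ ℓ') y' (hy' : y' ∈ ℓ') h
  have hQy : Q ≠ y := fun h => hQ' (h ▸ hy)
  have hQy' : Q ≠ y' := fun h => hQ' (h ▸ hy')
  have hax := mkLine_ax (L := L) hQy
  have hax' := mkLine_ax (L := L) hQy'
  obtain ⟨hℓ, hm⟩ := project_mem hQ hQy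
  have hQp : Q ≠ project ℓ Q y := fun h' => hQ (h' ▸ hℓ)
  have hm' := (project_mem hQ hQy').2 _ hax'.1 hax'.2
  rw [← h] at hm'
  have hlines := eq_of_mem_of_mem hQp hax.1 (hm _ hax.1 hax.2) hax'.1 hm'
  exact (eq_or_eq hy hy' hax.2 (hlines ▸ hax'.2)).resolve_right fun h' => hQ' (h' ▸ hax.1)

theorem project_ne_mkPoint {ℓ₁ ℓ₂ : L} (hne : ℓ₁ ≠ ℓ₂) (hQ₁ : Q ∉ ℓ₁) (hQ₂ : Q ∉ ℓ₂) (hy : y ∈ ℓ₂)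
    (hyE : y ≠ mkPoint hne) : project ℓ₁ Q y ≠ mkPoint hne := fun h =>
  hyE <| project_injOn hQ₁ hQ₂ hy (mkPoint_ax hne).2 <| by
    rw [h, project_of_mem hQ₁ (mkPoint_ax hne).1]

theorem card_inter_image_project_le_secantCount [Fintype L] [Finite P] [DecidableEq P]
    (hQ : Q ∉ ℓ) {S₁ S₂ : Finset P} (h₁ : ∀ x ∈ S₁, x ∈ ℓ) (hQS₂ : Q ∉ S₂)
    (hdisj : Disjoint S₁ S₂) :
    #(S₁ ∩ S₂.image (project ℓ Q)) ≤ secantCount L ↑(S₁ ∪ S₂) Q := by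
  classical
  set W := S₁ ∩ S₂.image (project ℓ Q)
  have hQx : ∀ x ∈ W, Q ≠ x := fun x hx h => hQ (h ▸ h₁ x (mem_inter.mp hx).1)
  let line : P → L := fun x => if h : Q = x then ℓ else mkLine h
  have hline : ∀ x ∈ W, Q ∈ line x ∧ x ∈ line x := fun x hx => by
    simpa [line, hQx x hx] using mkLine_ax (L := L) (hQx x hx)
  have hinj : Set.InjOn line W := fun x hx x' hx' h =>
    (eq_or_eq (h₁ x (mem_inter.mp hx).1) (h₁ x' (mem_inter.mp hx').1) (hline x hx).2
      (h ▸ (hline x' hx').2)).resolve_right fun h' => hQ (h' ▸ (hline x hx).1)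
  calc #W = #(W.image line) := (card_image_of_injOn hinj).symm
    _ ≤ _ := card_le_secantCount _ _ _ ?_
  simp only [mem_image, forall_exists_index, and_imp]
  rintro _ x hx rfl
  obtain ⟨hxS₁, y, hyS₂, rfl⟩ := mem_inter.mp hx |>.imp_right mem_image.mp
  have hQy : Q ≠ y := fun h => hQS₂ (h ▸ hyS₂)
  have hax := mkLine_ax (L := L) hQy
  have hyline : y ∈ line (project ℓ Q y) := by
    rw [eq_of_mem_of_mem (hQx _ hx) (hline _ hx).1 (hline _ hx).2 hax.1
      ((project_mem hQ hQy).2 _ hax.1 hax.2)]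
    exact hax.2
  refine ⟨(hline _ hx).1, (Set.one_lt_ncard_iff (Set.toFinite _)).mpr
    ⟨_, y, ⟨?_, (hline _ hx).2⟩, ⟨?_, hyline⟩, ?_⟩⟩
  · simp [hxS₁]
  · simp [hyS₂]
  · exact fun h => disjoint_left.mp hdisj hxS₁ (by rwa [h])

theorem isMuSaturating_insert_union [Fintype L] [Finite P] [DecidableEq P] {ℓ₁ ℓ₂ : L}
    (hne : ℓ₁ ≠ ℓ₂) {S₁ S₂ : Finset P} {μ : ℕ}
    (h₁ : ∀ x ∈ S₁, x ∈ ℓ₁ ∧ x ≠ mkPoint hne) (h₂ : ∀ y ∈ S₂, y ∈ ℓ₂ ∧ y ≠ mkPoint hne)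
    (hμ₁ : μ ≤ #S₁) (hμ₂ : μ ≤ #S₂)
    (hmeet : ∀ Q, Q ∉ ℓ₁ → Q ∉ ℓ₂ → μ ≤ #(S₁ ∩ S₂.image (project ℓ₁ Q))) :
    IsMuSaturating L ↑(insert (mkPoint hne) (S₁ ∪ S₂)) μ := by
  set E : P := mkPoint hne
  have hon : ∀ {ℓ : L} {T : Finset P}, E ∈ ℓ → (∀ x ∈ T, x ∈ ℓ ∧ x ≠ E) → T ⊆ S₁ ∪ S₂ →
      μ ≤ #T → ∀ Q ∈ ℓ, μ ≤ secantCount L ↑(insert E (S₁ ∪ S₂)) Q := by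
    intro ℓ T hE hT hTS hμT Q hQ
    refine le_secantCount_of_lt_card hQ (T := insert E T) (fun x hx => ?_) ?_
    · rcases mem_insert.mp hx with rfl | hx
      · exact ⟨mem_insert_self _ _, hE⟩
      · exact ⟨mem_insert_of_mem (hTS hx), (hT x hx).1⟩
    · rw [card_insert_of_notMem fun h => (hT E h).2 rfl]
      omega
  intro Q hQ
  by_cases hQ₁ : Q ∈ ℓ₁
  · exact hon (mkPoint_ax hne).1 h₁ subset_union_left hμ₁ Q hQ₁
  by_cases hQ₂ : Q ∈ ℓ₂
  · exact hon (mkPoint_ax hne).2 h₂ subset_union_right hμ₂ Q hQ₂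
  have hdisj : Disjoint S₁ S₂ := disjoint_left.mpr fun x hx₁ hx₂ =>
    (h₁ x hx₁).2 <| (eq_or_eq (h₁ x hx₁).1 (mkPoint_ax hne).1 (h₂ x hx₂).1
      (mkPoint_ax hne).2).resolve_right hne
  calc μ ≤ #(S₁ ∩ S₂.image (project ℓ₁ Q)) := hmeet Q hQ₁ hQ₂
    _ ≤ secantCount L ↑(S₁ ∪ S₂) Q := card_inter_image_project_le_secantCount hQ₁
        (fun x hx => (h₁ x hx).1) (fun h => hQ₂ (h₂ Q h).1) hdisj
    _ ≤ _ := secantCount_mono (by simp) Q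

theorem card_filter_mem [Fintype P] [Finite L] (ℓ : L) [DecidablePred (· ∈ ℓ)] :
    #{p : P | p ∈ ℓ} = order P L + 1 := by
  rw [← Fintype.card_subtype, ← Nat.card_eq_fintype_card]
  exact pointCount_eq P ℓ

theorem exists_isMuSaturating_card_le [Fintype P] [Fintype L] {q k μ : ℕ}
    (horder : order P L = q) (hμk : μ ≤ k) (hkq : k ≤ q)
    (hbad : (q + 1) ^ 2 * lowMeetCount q k μ < q.choose k) :
    ∃ S : Finset P, IsMuSaturating L ↑S μ ∧ #S ≤ 2 * k + 1 := by
  classical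
  obtain ⟨-, p, -, ℓ₁, ℓ₂, -, -, -, hp₁, hp₂, -⟩ := exists_config (P := P) (L := L)
  have hne : ℓ₁ ≠ ℓ₂ := by rintro rfl; exact hp₁ hp₂
  set E : P := mkPoint hne
  have hpunct : ∀ {ℓ : L} {x : P}, x ∈ ({p : P | p ∈ ℓ} : Finset P).erase E ↔ x ∈ ℓ ∧ x ≠ E := by
    simp [and_comm]
  have hcard : ∀ {ℓ : L}, E ∈ ℓ → #(({p : P | p ∈ ℓ} : Finset P).erase E) = q := fun hE => by
    rw [card_erase_of_mem (by simpa using hE), card_filter_mem, horder, Nat.add_sub_cancel]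
  set A := ({p : P | p ∈ ℓ₁} : Finset P).erase E
  obtain ⟨S₂, hS₂, hS₂k⟩ := exists_subset_card_eq
    (show k ≤ #(({p : P | p ∈ ℓ₂} : Finset P).erase E) from hcard (mkPoint_ax hne).2 ▸ hkq)
  have h₂ : ∀ y ∈ S₂, y ∈ ℓ₂ ∧ y ≠ E := fun y hy => hpunct.mp (hS₂ hy)
  set X : Finset P := {Q | Q ∉ ℓ₁ ∧ Q ∉ ℓ₂}
  have hX : #X * lowMeetCount #A k μ < (#A).choose k := by
    rw [hcard (mkPoint_ax hne).1]
    refine lt_of_le_of_lt (Nat.mul_le_mul_right _ ?_) hbad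
    calc #X ≤ Fintype.card P := card_le_univ X
      _ ≤ (q + 1) ^ 2 := by rw [card_points P L, horder]; nlinarith
  have hM : ∀ Q ∈ X, S₂.image (project ℓ₁ Q) ⊆ A ∧ #(S₂.image (project ℓ₁ Q)) = k := by
    intro Q hQ
    obtain ⟨hQ₁, hQ₂⟩ : Q ∉ ℓ₁ ∧ Q ∉ ℓ₂ := by simpa [X] using hQ
    have hinj := (project_injOn hQ₁ hQ₂).mono fun y hy => (h₂ y hy).1
    refine ⟨fun x hx => ?_, hS₂k ▸ card_image_of_injOn hinj⟩
    obtain ⟨y, hy, rfl⟩ := mem_image.mp hx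
    exact hpunct.mpr ⟨(project_mem hQ₁ fun h => hQ₂ (h ▸ (h₂ y hy).1)).1,
      project_ne_mkPoint hne hQ₁ hQ₂ (h₂ y hy).1 (h₂ y hy).2⟩
  obtain ⟨S₁, hS₁, hmeet⟩ := exists_mem_powersetCard_forall_le_card_inter A X _ hM hX
  rw [mem_powersetCard] at hS₁
  refine ⟨insert E (S₁ ∪ S₂), isMuSaturating_insert_union hne (fun x hx => hpunct.mp (hS₁.1 hx))
    h₂ (hS₁.2 ▸ hμk) (hS₂k ▸ hμk) fun Q hQ₁ hQ₂ => hmeet Q (by simp [X, hQ₁, hQ₂]), ?_⟩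
  calc #(insert E (S₁ ∪ S₂)) ≤ #(S₁ ∪ S₂) + 1 := card_insert_le _ _
    _ ≤ #S₁ + #S₂ + 1 := Nat.add_le_add_right (card_union_le _ _) 1
    _ = 2 * k + 1 := by rw [hS₁.2, hS₂k]; ring

end Configuration.ProjectivePlane

theorem exists_sq_mul_lowMeetCount_lt_choose {q μ : ℕ} (hq : 3 ≤ q) (hμ : 2 ≤ μ) (hμq : μ ≤ q) :
    ∃ k, μ ≤ k ∧ k ≤ q ∧ (q + 1) ^ 2 * lowMeetCount q k μ < q.choose k ∧
      (2 * k + 1 : ℝ) ≤ 2 * (2 * μ - 1) * √((q + 1) * log (q + 1)) + 2 := by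
  set s := √((q + 1) * log (q + 1))
  have hs : 2 ≤ s := two_le_sqrt_mul_log_add_one (by exact_mod_cast hq)
  have hμ' : (2 : ℝ) ≤ μ := by exact_mod_cast hμ
  by_cases hfull : (2 * q + 1 : ℝ) ≤ 2 * (2 * μ - 1) * s + 2
  · exact ⟨q, hμq, le_rfl, by simp [lowMeetCount_self hμq], hfull⟩
  set k := ⌊(2 * μ - 1) * s + 1 / 2⌋₊
  have hk_le : (k : ℝ) ≤ (2 * μ - 1) * s + 1 / 2 := Nat.floor_le (by nlinarith)
  have hk_gt : (2 * μ - 1) * s - 1 / 2 < k := by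
    linarith [Nat.lt_floor_add_one ((2 * μ - 1) * s + 1 / 2)]
  have hkq : k ≤ q := by exact_mod_cast (show (k : ℝ) ≤ q by linarith)
  refine ⟨k, ?_, hkq, sq_mul_lowMeetCount_lt_choose hq hμ hkq hk_gt, by linarith⟩
  exact_mod_cast (show (μ : ℝ) ≤ k by nlinarith)

theorem mu_saturating_bound_large_mu (q : ℕ) (hq : 3 ≤ q)
    (P L : Type*) [Fintype P] [Fintype L] [Membership P L]
    [Configuration.ProjectivePlane P L]
    (horder : Configuration.ProjectivePlane.order P L = q)
    (δ : ℝ) (hδ : δ = 1 / Real.sqrt ((q + 1) * Real.log (q + 1)))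
    (μ : ℕ) (hμ₁ : 2 ≤ μ) (hμ₂ : (μ : ℝ) ≤ ((1 - δ) * q - δ + 1) / 2 + 1) :
    ∃ S : Finset P, IsMuSaturating L (↑S : Set P) μ ∧
      (S.card : ℝ) ≤ 2 * (2 * (μ : ℝ) - 1) * Real.sqrt ((q + 1) * Real.log (q + 1)) + 2 := by
  have hμq : μ ≤ q := by
    have hδ₀ : 0 ≤ δ := hδ ▸ by positivity
    have hq' : (3 : ℝ) ≤ q := by exact_mod_cast hq
    exact_mod_cast (show (μ : ℝ) ≤ q by nlinarith)
  obtain ⟨k, hμk, hkq, hbad, hk⟩ := exists_sq_mul_lowMeetCount_lt_choose hq hμ₁ hμq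
  obtain ⟨S, hS, hcard⟩ :=
    Configuration.ProjectivePlane.exists_isMuSaturating_card_le horder hμk hkq hbad
  exact ⟨S, hS, le_trans (by exact_mod_cast hcard) hk⟩
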